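/- (Moore's bound for simplicial complexes.) Let n, d be positive integers with d + 1 ≤ n, let X^d be a set of (d+1)-element subsets of {1,…,n}, and suppose the adjacency graph G is connected and every (d−1)-simplex has degree exactly r, where r ≥ 2 and (r−1)·d ≥ 2. If D is the diameter of G, then the number N = C(n,d) of (d−1)-simplices satisfies N ≤ 1 + r·d·(((r−1)·d)^{D} − 1)/((r−1)·d − 1). -/

import Mathlib

/-- The adjacency graph of the pair `(X_{d-1}, X^d)`: vertices are the `d`-element
subsets of `Fin n` (the `(d-1)`-simplices), and two distinct vertices are adjacent
iff their union belongs to `Xd`. -/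
def simGraph (n d : ℕ) (Xd : Finset (Finset (Fin n))) :
    SimpleGraph {s : Finset (Fin n) // s.card = d} where
  Adj σ τ := σ ≠ τ ∧ σ.val ∪ τ.val ∈ Xd
  symm := ⟨fun σ τ ⟨h1, h2⟩ => ⟨h1.symm, by rwa [Finset.union_comm]⟩⟩
  loopless := ⟨fun σ ⟨h, _⟩ => h rfl⟩

/-- The degree of a `(d-1)`-simplex: the number of `d`-simplices in `Xd` containing it. -/
def simDegree (n d : ℕ) (Xd : Finset (Finset (Fin n)))
    (σ : {s : Finset (Fin n) // s.card = d}) : ℕ :=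
  (Xd.filter (fun t => σ.val ⊆ t)).card

/-!
Fix a base simplex `σ₀` and sort all `(d-1)`-simplices by their distance from it. Every neighbour
`τ` of a simplex `ρ` lies, together with `ρ`, in one of the `r` simplices `ρ ∪ τ ∈ X^d`, each of
which has only `d` other faces; so `σ₀` has at most `r d` neighbours. A simplex `ρ` at distance
`k + 1 ≥ 1` reaches distance `k + 2` through at most `(r - 1) d` neighbours, because the simplex it
shares with a predecessor only leads back to distance `≤ k`. Summing the resulting geometric bounds
on the spheres of radius `0, …, D` gives Moore's bound.
-/

open Finset

namespace SimpleGraph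

variable {V : Type*} {G : SimpleGraph V}

theorem Connected.exists_adj_dist_eq_of_dist_eq_succ (hG : G.Connected) {u w : V} {k : ℕ}
    (h : G.dist u w = k + 1) : ∃ v, G.Adj v w ∧ G.dist u v = k := by
  obtain ⟨p, hp⟩ := hG.exists_walk_length_eq_dist w u
  cases p with
  | nil => rw [dist_comm, dist_self] at h; omega
  | @cons _ v _ hadj q =>
    refine ⟨v, hadj.symm, le_antisymm ?_ ?_⟩
    · have := dist_le q.reverse
      rw [Walk.length_reverse] at this
      rw [Walk.length_cons, dist_comm, h] at hp
      omega
    · have := hG.dist_triangle (u := u) (w := w) (v := v)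
      rw [dist_eq_one_iff_adj.mpr hadj.symm] at this
      omega

variable [Fintype V]

noncomputable def sphere (G : SimpleGraph V) (v : V) (k : ℕ) : Finset V := {w | G.dist v w = k}

theorem Connected.sphere_zero (hG : G.Connected) (v : V) : G.sphere v 0 = {v} := by
  ext w
  simp [sphere, hG.dist_eq_zero_iff, eq_comm]

theorem sphere_one [DecidableRel G.Adj] (v : V) : G.sphere v 1 = G.neighborFinset v := by
  ext w
  simp [sphere]

theorem Connected.card_sphere_succ_succ_le [DecidableEq V] [DecidableRel G.Adj]
    (hG : G.Connected) (v : V) (k q : ℕ)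
    (hforward : ∀ w ∈ G.sphere v (k + 1), #{x ∈ G.sphere v (k + 2) | G.Adj w x} ≤ q) :
    #(G.sphere v (k + 2)) ≤ #(G.sphere v (k + 1)) * q := by
  refine le_trans (card_le_card fun x hx => ?_) (card_biUnion_le_card_mul _ _ _ hforward)
  obtain ⟨w, hwx, hw⟩ := hG.exists_adj_dist_eq_of_dist_eq_succ (mem_filter.mp hx).2
  exact mem_biUnion.mpr ⟨w, by simpa [sphere] using hw, mem_filter.mpr ⟨hx, hwx⟩⟩

theorem Connected.card_eq_sum_card_sphere (hG : G.Connected) (v : V) :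
    Fintype.card V = ∑ k ∈ range (G.diam + 1), #(G.sphere v k) := by
  have : Nonempty V := ⟨v⟩
  have hdiam : G.ediam ≠ ⊤ := G.connected_iff_ediam_ne_top.mp hG
  exact card_eq_sum_card_fiberwise fun w _ => mem_range_succ_iff.mpr (dist_le_diam hdiam)

theorem Connected.card_le_moore_bound [DecidableEq V] [DecidableRel G.Adj] (hG : G.Connected)
    (v : V) {a q : ℕ} (hv : G.degree v ≤ a)
    (hforward : ∀ k, ∀ w ∈ G.sphere v (k + 1), #{x ∈ G.sphere v (k + 2) | G.Adj w x} ≤ q) :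
    Fintype.card V ≤ 1 + ∑ j ∈ range G.diam, a * q ^ j := by
  have hsphere : ∀ j, #(G.sphere v (j + 1)) ≤ a * q ^ j := by
    intro j
    induction j with
    | zero => simpa [sphere_one] using hv
    | succ j ih =>
      calc #(G.sphere v (j + 2)) ≤ #(G.sphere v (j + 1)) * q :=
            hG.card_sphere_succ_succ_le v j q (hforward j)
        _ ≤ a * q ^ j * q := Nat.mul_le_mul_right q ih
        _ = a * q ^ (j + 1) := by ring
  rw [hG.card_eq_sum_card_sphere v, sum_range_succ', hG.sphere_zero, card_singleton, add_comm]
  exact Nat.add_le_add_left (sum_le_sum fun j _ => hsphere j) 1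

end SimpleGraph

theorem Finset.union_eq_of_ne_of_card_eq_succ {α : Type*} [DecidableEq α] {s t u : Finset α}
    {d : ℕ} (hs : s ⊆ u) (ht : t ⊆ u) (hst : s ≠ t) (hsd : #s = d) (htd : #t = d)
    (hu : #u = d + 1) : s ∪ t = u := by
  have hts : ¬ t ⊆ s := fun h => hst (eq_of_subset_of_card_le h (by omega)).symm
  have hlt : #s < #(s ∪ t) := card_lt_card <|
    ssubset_iff_subset_ne.mpr ⟨subset_union_left, fun h => hts (h ▸ subset_union_right)⟩
  exact eq_of_subset_of_card_le (union_subset hs ht) (by omega)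

section Counting

variable {α : Type*} [Fintype α] [DecidableEq α] {d : ℕ}

theorem card_filter_ne_union_eq_le {t : Finset α} (ht : #t = d + 1)
    (ρ : {s : Finset α // #s = d}) :
    #{τ : {s : Finset α // #s = d} | τ ≠ ρ ∧ ρ.val ∪ τ.val = t} ≤ d := by
  by_cases hρt : ρ.val ⊆ t
  · calc _ ≤ #((t.powersetCard d).erase ρ.val) := by
          refine card_le_card_of_injOn Subtype.val (fun τ hτ => ?_) Subtype.val_injective.injOn
          obtain ⟨hne, hunion⟩ := (mem_filter.mp hτ).2
          simpa [mem_powersetCard, ← hunion, τ.2] using Subtype.val_injective.ne hne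
      _ = d := by
          rw [card_erase_of_mem (mem_powersetCard.mpr ⟨hρt, ρ.2⟩), card_powersetCard, ht,
            Nat.choose_succ_self_right, Nat.add_sub_cancel]
  · refine (card_eq_zero.mpr (filter_eq_empty_iff.mpr ?_)).trans_le (Nat.zero_le d)
    rintro τ - ⟨-, hunion⟩
    exact hρt (hunion ▸ subset_union_left)

theorem card_filter_ne_union_mem_le {B : Finset (Finset α)} (hB : ∀ t ∈ B, #t = d + 1)
    (ρ : {s : Finset α // #s = d}) :
    #{τ : {s : Finset α // #s = d} | τ ≠ ρ ∧ ρ.val ∪ τ.val ∈ B} ≤ #B * d := by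
  rw [mul_comm]
  refine card_le_mul_card_image_of_maps_to (f := fun τ => ρ.val ∪ τ.val)
    (fun τ hτ => (mem_filter.mp hτ).2.2) d fun t ht => ?_
  refine le_trans (card_le_card fun τ hτ => ?_) (card_filter_ne_union_eq_le (hB t ht) ρ)
  simp only [mem_filter] at hτ ⊢
  exact ⟨hτ.1.1, hτ.1.2.1, hτ.2⟩

end Counting

section SimplicialAdjacency

variable {n d : ℕ} {Xd : Finset (Finset (Fin n))}

instance : DecidableRel (simGraph n d Xd).Adj :=
  fun σ τ => inferInstanceAs (Decidable (σ ≠ τ ∧ σ.val ∪ τ.val ∈ Xd))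

theorem simGraph_adj_of_subset_union (hXd : ∀ s ∈ Xd, #s = d + 1)
    {π ρ τ : {s : Finset (Fin n) // #s = d}} (hπρ : (simGraph n d Xd).Adj π ρ)
    (hτ : τ.val ⊆ π.val ∪ ρ.val) (hπτ : π ≠ τ) : (simGraph n d Xd).Adj π τ := by
  refine ⟨hπτ, ?_⟩
  rw [Finset.union_eq_of_ne_of_card_eq_succ subset_union_left hτ (Subtype.val_injective.ne hπτ)
    π.2 τ.2 (hXd _ hπρ.2)]
  exact hπρ.2

theorem simGraph_degree_le (hXd : ∀ s ∈ Xd, #s = d + 1) (ρ : {s : Finset (Fin n) // #s = d}) :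
    (simGraph n d Xd).degree ρ ≤ simDegree n d Xd ρ * d := by
  refine le_trans (card_le_card fun τ hτ => ?_)
    (card_filter_ne_union_mem_le (fun t ht => hXd t (mem_filter.mp ht).1) ρ)
  obtain ⟨hne, hmem⟩ := (SimpleGraph.mem_neighborFinset _ _ _).mp hτ
  exact mem_filter.mpr ⟨mem_univ _, Ne.symm hne, mem_filter.mpr ⟨hmem, subset_union_left⟩⟩

theorem simGraph_card_forward_neighbors_le (hXd : ∀ s ∈ Xd, #s = d + 1)
    (hconn : (simGraph n d Xd).Connected) (σ₀ : {s : Finset (Fin n) // #s = d}) (k : ℕ)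
    (ρ : {s : Finset (Fin n) // #s = d}) (hρ : ρ ∈ (simGraph n d Xd).sphere σ₀ (k + 1)) :
    #{τ ∈ (simGraph n d Xd).sphere σ₀ (k + 2) | (simGraph n d Xd).Adj ρ τ} ≤
      (simDegree n d Xd ρ - 1) * d := by
  set G := simGraph n d Xd
  obtain ⟨π, hπρ, hπ⟩ :=
    hconn.exists_adj_dist_eq_of_dist_eq_succ (by simpa [SimpleGraph.sphere] using hρ)
  have ht₀ : π.val ∪ ρ.val ∈ Xd.filter (ρ.val ⊆ ·) := mem_filter.mpr ⟨hπρ.2, subset_union_right⟩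
  have hfar : ∀ τ, G.dist σ₀ τ = k + 2 → ρ.val ∪ τ.val ≠ π.val ∪ ρ.val := by
    intro τ hτ hunion
    have hτsub : τ.val ⊆ π.val ∪ ρ.val := hunion ▸ subset_union_right
    by_cases hπτ : π = τ
    · subst hπτ; omega
    · have := hconn.dist_triangle (u := σ₀) (v := π) (w := τ)
      rw [SimpleGraph.dist_eq_one_iff_adj.mpr (simGraph_adj_of_subset_union hXd hπρ hτsub hπτ)]
        at this
      omega
  have hB : ∀ t ∈ (Xd.filter (ρ.val ⊆ ·)).erase (π.val ∪ ρ.val), #t = d + 1 :=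
    fun t ht => hXd t (mem_filter.mp (mem_of_mem_erase ht)).1
  refine (card_le_card fun τ hτ => ?_).trans ((card_filter_ne_union_mem_le hB ρ).trans_eq ?_)
  · simp only [mem_filter, SimpleGraph.sphere, mem_univ, true_and] at hτ
    exact mem_filter.mpr ⟨mem_univ _, Ne.symm hτ.2.1, mem_erase.mpr
      ⟨hfar τ hτ.1, mem_filter.mpr ⟨hτ.2.2, subset_union_left⟩⟩⟩
  · rw [card_erase_of_mem ht₀]; rfl

end SimplicialAdjacency

theorem natCast_one_add_sum_mul_pow {a q : ℕ} (hq : (q : ℝ) ≠ 1) (D : ℕ) :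
    ((1 + ∑ j ∈ range D, a * q ^ j : ℕ) : ℝ) = 1 + a * ((q : ℝ) ^ D - 1) / (q - 1) := by
  push_cast
  rw [← mul_sum, geom_sum_eq hq, mul_div_assoc]

theorem stmt2_general (n d r : ℕ)
    (hrd : 2 ≤ (r - 1) * d)
    (Xd : Finset (Finset (Fin n))) (hXd : ∀ s ∈ Xd, s.card = d + 1)
    (hconn : (simGraph n d Xd).Connected)
    (hreg : ∀ σ, simDegree n d Xd σ = r)
    (D : ℕ) (hD : D = (simGraph n d Xd).diam) :
    ((n.choose d : ℝ)) ≤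
      1 + (r : ℝ) * d * ((((r : ℝ) - 1) * d) ^ D - 1) / (((r : ℝ) - 1) * d - 1) := by
  obtain ⟨σ₀⟩ := hconn.nonempty
  have hmoore := hconn.card_le_moore_bound σ₀ (a := r * d) (q := (r - 1) * d)
    ((simGraph_degree_le hXd σ₀).trans_eq (by rw [hreg]))
    fun k ρ hρ => (simGraph_card_forward_neighbors_le hXd hconn σ₀ k ρ hρ).trans_eq (by rw [hreg])
  have hr : 1 ≤ r := Nat.one_le_iff_ne_zero.mpr fun h => by simp [h] at hrd
  have hq : (((r - 1) * d : ℕ) : ℝ) = ((r : ℝ) - 1) * d := by push_cast [hr]; rfl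
  rw [Fintype.card_finset_len, Fintype.card_fin, ← hD] at hmoore
  have hq1 : (((r - 1) * d : ℕ) : ℝ) ≠ 1 := by
    have : (2 : ℝ) ≤ ((r - 1) * d : ℕ) := by exact_mod_cast hrd
    linarith
  calc (n.choose d : ℝ) ≤ ((1 + ∑ j ∈ range D, r * d * ((r - 1) * d) ^ j : ℕ) : ℝ) := by
        exact_mod_cast hmoore
    _ = _ := by rw [natCast_one_add_sum_mul_pow hq1, hq]; push_cast; ring

theorem stmt2 (n d r : ℕ) (hd : 0 < d) (hn : d + 1 ≤ n) (hr : 2 ≤ r)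
    (hrd : 2 ≤ (r - 1) * d)
    (Xd : Finset (Finset (Fin n))) (hXd : ∀ s ∈ Xd, s.card = d + 1)
    (hconn : (simGraph n d Xd).Connected)
    (hreg : ∀ σ, simDegree n d Xd σ = r)
    (D : ℕ) (hD : D = (simGraph n d Xd).diam) :
    ((n.choose d : ℝ)) ≤
      1 + (r : ℝ) * d * ((((r : ℝ) - 1) * d) ^ D - 1) / (((r : ℝ) - 1) * d - 1) :=
  stmt2_general n d r hrd Xd hXd hconn hreg D hD
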